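/- arXiv:0909.2408 — 2 statements merged into one kernel-verified Lean document; each statement's English description precedes it below -/
import Mathlib

section
/- (Rate-distortion as a projection of coordination capacity, two-node network.) Let d : 𝒳 × 𝒴 → [0,∞) be a distortion function. Then the rate-distortion region for the memoryless source p0(x) in the two-node network equals the image of the coordination capacity region under the map (R, p(y|x)) ↦ (R, Σ_{x,y} p0(x)p(y|x)d(x,y)): precisely, (R,D) ∈ D_{p0} if and only if there exists a conditional pmf p(y|x) with (R, p(y|x)) ∈ C_{p0} and Σ_{x,y} p0(x)p(y|x)d(x,y) ≤ D. -/
open Filter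

/-- A probability mass function on a finite alphabet. -/
def IsPMF {α : Type} [Fintype α] (p : α → ℝ) : Prop :=
  (∀ a, 0 ≤ p a) ∧ ∑ a, p a = 1

/-- Total variation distance: half the `L¹` distance. -/
noncomputable def tv {α : Type} [Fintype α] (p q : α → ℝ) : ℝ :=
  (1 / 2) * ∑ a, |p a - q a|

open Classical in
/-- Joint type (empirical distribution) of a sequence. -/
noncomputable def jointType {α : Type} (n : ℕ) (s : Fin n → α) : α → ℝ :=
  fun a => ((Finset.univ.filter fun t => s t = a).card : ℝ) / n

open Classical in
/-- Pushforward of a mass function along a map. -/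
noncomputable def pmfMap {S α : Type} [Fintype S] (p : S → ℝ) (f : S → α) : α → ℝ :=
  fun a => ∑ s, if f s = a then p s else 0

/-- Shannon entropy, base 2, with the convention `0 log 0 = 0`. -/
noncomputable def H2 {α : Type} [Fintype α] (p : α → ℝ) : ℝ :=
  ∑ a, -(p a * Real.logb 2 (p a))

/-- Mutual information `I(f(S); g(S))` for `S ∼ p`. -/
noncomputable def MI {S α β : Type} [Fintype S] [Fintype α] [Fintype β]
    (p : S → ℝ) (f : S → α) (g : S → β) : ℝ :=
  H2 (pmfMap p f) + H2 (pmfMap p g) - H2 (pmfMap p fun s => (f s, g s))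

/-- Conditional mutual information `I(f(S); g(S) | h(S))` for `S ∼ p`. -/
noncomputable def condMI {S α β γ : Type} [Fintype S] [Fintype α] [Fintype β] [Fintype γ]
    (p : S → ℝ) (f : S → α) (g : S → β) (h : S → γ) : ℝ :=
  H2 (pmfMap p fun s => (f s, h s)) + H2 (pmfMap p fun s => (g s, h s))
    - H2 (pmfMap p fun s => (f s, g s, h s)) - H2 (pmfMap p h)

/-- The number of messages `⌈2^{nR}⌉` available at rate `R` and blocklength `n`. -/
noncomputable def msgCount (n : ℕ) (R : ℝ) : ℕ := ⌈(2 : ℝ) ^ ((n : ℝ) * R)⌉₊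

open Classical in
/-- Probability of the event `E` under the (mass) distribution `μ`. -/
noncomputable def probOf {α : Type} [Fintype α] (μ : α → ℝ) (E : α → Prop) : ℝ :=
  ∑ a, if E a then μ a else 0

/-- Achievability of `p(y|x)` at rate `R` in the two-node network. -/
def TwoNodeAchievable {𝒳 𝒴 : Type} [Fintype 𝒳] [Fintype 𝒴]
    (p0 : 𝒳 → ℝ) (R : ℝ) (q : 𝒳 → 𝒴 → ℝ) : Prop :=
  ∃ enc : (n : ℕ) → (Fin n → 𝒳) → Fin (msgCount n R),
  ∃ dec : (n : ℕ) → Fin (msgCount n R) → (Fin n → 𝒴),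
    ∀ ε > 0,
      Tendsto (fun n => probOf (fun xs : Fin n → 𝒳 => ∏ t, p0 (xs t)) fun xs =>
          ε ≤ tv (jointType n fun t => (xs t, dec n (enc n xs) t))
              (fun a => p0 a.1 * q a.1 a.2)) atTop (nhds 0)

/-- Coordination capacity region of the two-node network. -/
def twoNodeCapacity {𝒳 𝒴 : Type} [Fintype 𝒳] [Fintype 𝒴] (p0 : 𝒳 → ℝ) :
    Set (ℝ × (𝒳 → 𝒴 → ℝ)) :=
  closure {v | 0 ≤ v.1 ∧ (∀ x, IsPMF (v.2 x)) ∧ TwoNodeAchievable p0 v.1 v.2}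

/-- Achievability of the rate–distortion pair `(R, D)`: a sequence of `(2^{nR}, n)` codes
whose expected average distortion has limsup at most `D`. -/
def RDAchievable {𝒳 𝒴 : Type} [Fintype 𝒳] [Fintype 𝒴]
    (p0 : 𝒳 → ℝ) (d : 𝒳 → 𝒴 → ℝ) (R D : ℝ) : Prop :=
  ∃ enc : (n : ℕ) → (Fin n → 𝒳) → Fin (msgCount n R),
  ∃ dec : (n : ℕ) → Fin (msgCount n R) → (Fin n → 𝒴),
    Filter.limsup (fun n => ∑ xs : Fin n → 𝒳,
        (∏ t, p0 (xs t)) * ((n : ℝ)⁻¹ * ∑ t, d (xs t) (dec n (enc n xs) t)))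
      atTop ≤ D

/-- Rate–distortion region of the two-node network. -/
def rdRegion {𝒳 𝒴 : Type} [Fintype 𝒳] [Fintype 𝒴]
    (p0 : 𝒳 → ℝ) (d : 𝒳 → 𝒴 → ℝ) : Set (ℝ × ℝ) :=
  closure {v : ℝ × ℝ | 0 ≤ v.1 ∧ RDAchievable (𝒴 := 𝒴) p0 d v.1 v.2}


/-!
If the joint type of `(Xⁿ, Yⁿ)` converges in probability to `p0(x) q(y|x)`, then so does its
expectation, and the expected distortion of a code is linear in its expected joint type. So a
coordination code for `q` is a rate–distortion code with distortion `E d(X, Y)` under `p0 q`.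

Conversely, a rate–distortion code of length `n` has some expected joint type `P`, with
`x`-marginal `p0`, and `q = P / p0` has exactly the distortion of the code. Repeating the code on
consecutive blocks of length `n`, the block types are i.i.d. with mean `P`, so by Chebyshev's
inequality the joint type of the repeated code concentrates at `P`: `(R + 1/n, q)` is achievable
for coordination. Since conditional pmfs form a compact set, the image of the (closed) capacity
region is closed, which takes care of `n → ∞` and of the closure defining the rate–distortion
region.
-/

open Topology

section IID

variable {α : Type} [Fintype α]

def iid (p : α → ℝ) (ι : Type) [Fintype ι] (xs : ι → α) : ℝ := ∏ t, p (xs t)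

theorem sum_iid_mul_prod {ι : Type} [Fintype ι] [DecidableEq ι] (p : α → ℝ)
    (h : ι → α → ℝ) : ∑ xs : ι → α, iid p ι xs * ∏ t, h t (xs t) = ∏ t, ∑ x, p x * h t x := by
  simp only [iid, ← Finset.prod_mul_distrib]
  rw [Finset.prod_univ_sum, Fintype.piFinset_univ]

theorem IsPMF.iid {p : α → ℝ} (hp : IsPMF p) (ι : Type) [Fintype ι] [DecidableEq ι] :
    IsPMF (iid p ι) := by
  refine ⟨fun xs => Finset.prod_nonneg fun t _ => hp.1 _, ?_⟩
  simpa [hp.2] using sum_iid_mul_prod p fun _ _ => (1 : ℝ)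

variable {ι : Type} [Fintype ι] [DecidableEq ι] {p : α → ℝ}

theorem sum_iid_mul_apply (hp : IsPMF p) (i : ι) (g : α → ℝ) :
    ∑ xs : ι → α, iid p ι xs * g (xs i) = ∑ x, p x * g x := by
  have := sum_iid_mul_prod p fun t x => if t = i then g x else 1
  simp_rw [Finset.prod_ite_eq' Finset.univ i, Finset.mem_univ, if_true] at this
  rw [this]
  simp [apply_ite, hp.2]

theorem sum_iid_mul_apply_mul_apply (hp : IsPMF p) {i j : ι} (hij : i ≠ j) (g h : α → ℝ) :
    ∑ xs : ι → α, iid p ι xs * (g (xs i) * h (xs j)) = (∑ x, p x * g x) * ∑ x, p x * h x := by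
  have := sum_iid_mul_prod p fun t x => (if t = i then g x else 1) * if t = j then h x else 1
  simp_rw [Finset.prod_mul_distrib, Finset.prod_ite_eq' Finset.univ, Finset.mem_univ,
    if_true] at this
  rw [this]
  have factor : ∀ t, ∑ x, p x * ((if t = i then g x else 1) * if t = j then h x else 1) =
      (if t = i then ∑ x, p x * g x else 1) * if t = j then ∑ x, p x * h x else 1 := by
    intro t
    by_cases hti : t = i
    · subst hti
      simp [hij]
    · by_cases htj : t = j <;> simp [hti, htj, hij.symm, hp.2]
  simp_rw [factor, Finset.prod_mul_distrib, Finset.prod_ite_eq' Finset.univ, Finset.mem_univ,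
    if_true]

theorem sum_iid_mul_sq_avg_le {V : Type} [Fintype V] {ν : V → ℝ} (hν : IsPMF ν) {g : V → ℝ}
    (hmean : ∑ v, ν v * g v = 0) {C : ℝ} (hC : ∀ v, |g v| ≤ C) :
    ∑ b : ι → V, iid ν ι b * ((Fintype.card ι : ℝ)⁻¹ * ∑ i, g (b i)) ^ 2
      ≤ C ^ 2 / Fintype.card ι := by
  have cross : ∀ i i', ∑ b : ι → V, iid ν ι b * (g (b i) * g (b i'))
      ≤ if i = i' then C ^ 2 else 0 := by
    intro i i'
    split_ifs with h
    · subst h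
      rw [sum_iid_mul_apply hν i fun v => g v * g v]
      calc ∑ v, ν v * (g v * g v) ≤ ∑ v, ν v * C ^ 2 := by
            gcongr with v
            · exact hν.1 v
            · rw [← abs_mul_abs_self, sq]
              exact mul_self_le_mul_self (abs_nonneg _) (hC v)
        _ = C ^ 2 := by rw [← Finset.sum_mul, hν.2, one_mul]
    · rw [sum_iid_mul_apply_mul_apply hν h, hmean, zero_mul]
  calc _ = (Fintype.card ι : ℝ)⁻¹ ^ 2 *
        ∑ i, ∑ i', ∑ b : ι → V, iid ν ι b * (g (b i) * g (b i')) := by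
        simp_rw [mul_pow, sq (∑ i, _), Finset.sum_mul_sum, Finset.mul_sum]
        rw [Finset.sum_comm]
        refine Finset.sum_congr rfl fun i _ => ?_
        rw [Finset.sum_comm]
        exact Finset.sum_congr rfl fun i' _ => Finset.sum_congr rfl fun b _ => by ring
    _ ≤ (Fintype.card ι : ℝ)⁻¹ ^ 2 * ∑ i : ι, ∑ i' : ι, if i = i' then C ^ 2 else 0 := by
        gcongr with i _ i' _
        exact cross i i'
    _ = C ^ 2 / Fintype.card ι := by
        simp only [Finset.sum_ite_eq, Finset.mem_univ, if_true, Finset.sum_const,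
          Finset.card_univ, nsmul_eq_mul]
        rcases eq_or_ne (Fintype.card ι : ℝ) 0 with hk | hk
        · simp [hk]
        · field_simp

theorem sum_iid_mul_comp_sumInl {κ ρ : Type} [Fintype κ] [DecidableEq κ] [Fintype ρ]
    [DecidableEq ρ] (hp : IsPMF p) (e : ι ≃ κ ⊕ ρ) (G : (κ → α) → ℝ) :
    ∑ xs : ι → α, iid p ι xs * G (fun c => xs (e.symm (Sum.inl c)))
      = ∑ b : κ → α, iid p κ b * G b := by
  let E : (κ → α) × (ρ → α) ≃ (ι → α) :=
    (Equiv.sumArrowEquivProdArrow κ ρ α).symm.trans (e.symm.arrowCongr (Equiv.refl α))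
  have hE : ∀ bz t, E bz t = Sum.elim bz.1 bz.2 (e t) := fun bz t => by
    simp [E, Equiv.arrowCongr_apply, Equiv.sumArrowEquivProdArrow]
  have hiid : ∀ bz, iid p ι (E bz) = iid p κ bz.1 * iid p ρ bz.2 := fun bz => by
    simp only [iid, hE]
    rw [e.prod_comp fun s => p (Sum.elim bz.1 bz.2 s), Fintype.prod_sum_type]
    simp
  rw [← E.sum_comp, Fintype.sum_prod_type]
  simp only [hiid, hE, Equiv.apply_symm_apply, Sum.elim_inl]
  simp_rw [mul_right_comm _ (iid p ρ _), ← Finset.mul_sum, (hp.iid ρ).2, mul_one]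

end IID

section Events

variable {W : Type} [Fintype W] {μ : W → ℝ}

theorem probOf_nonneg (hμ : ∀ w, 0 ≤ μ w) (E : W → Prop) : 0 ≤ probOf μ E :=
  Finset.sum_nonneg fun w _ => by split_ifs <;> simp [hμ w]

theorem probOf_mono (hμ : ∀ w, 0 ≤ μ w) {E F : W → Prop} (h : ∀ w, E w → F w) :
    probOf μ E ≤ probOf μ F :=
  Finset.sum_le_sum fun w _ => by
    by_cases hE : E w
    · simp [hE, h w hE]
    · split_ifs <;> simp [hμ w]

theorem probOf_le_sum_mul_div (hμ : ∀ w, 0 ≤ μ w) {Z : W → ℝ} (hZ : ∀ w, 0 ≤ Z w) {c : ℝ}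
    (hc : 0 < c) : probOf μ (fun w => c ≤ Z w) ≤ (∑ w, μ w * Z w) / c := by
  rw [le_div_iff₀ hc, probOf, Finset.sum_mul]
  refine Finset.sum_le_sum fun w _ => ?_
  split_ifs with h
  · exact mul_le_mul_of_nonneg_left h (hμ w)
  · simpa using mul_nonneg (hμ w) (hZ w)

theorem sum_mul_le_add_mul_probOf (hμ : IsPMF μ) {Z : W → ℝ} {C ε : ℝ} (hZC : ∀ w, Z w ≤ C)
    (hε : 0 ≤ ε) : ∑ w, μ w * Z w ≤ ε + C * probOf μ (fun w => ε ≤ Z w) :=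
  calc ∑ w, μ w * Z w ≤ ∑ w, μ w * (ε + if ε ≤ Z w then C else 0) := by
        gcongr with w
        · exact hμ.1 w
        · split_ifs with h
          · linarith [hZC w]
          · linarith [not_le.mp h]
    _ = ε + C * probOf μ (fun w => ε ≤ Z w) := by
        simp only [mul_add, Finset.sum_add_distrib, ← Finset.sum_mul, hμ.2, one_mul, probOf,
          Finset.mul_sum, mul_ite, mul_zero]
        congr 1
        exact Finset.sum_congr rfl fun w _ => by split_ifs <;> ring

theorem tendsto_sum_mul_of_tendsto_probOf {W : ℕ → Type} [∀ n, Fintype (W n)]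
    {μ : ∀ n, W n → ℝ} (hμ : ∀ n, IsPMF (μ n)) {Z : ∀ n, W n → ℝ} {C : ℝ}
    (hZ0 : ∀ n w, 0 ≤ Z n w) (hZC : ∀ n w, Z n w ≤ C)
    (h : ∀ ε > 0, Tendsto (fun n => probOf (μ n) fun w => ε ≤ Z n w) atTop (𝓝 0)) :
    Tendsto (fun n => ∑ w, μ n w * Z n w) atTop (𝓝 0) := by
  refine tendsto_order.2 ⟨fun b hb => Eventually.of_forall fun n =>
    hb.trans_le (Finset.sum_nonneg fun w _ => mul_nonneg ((hμ n).1 w) (hZ0 n w)), fun b hb => ?_⟩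
  have hlim : Tendsto (fun n => b / 2 + C * probOf (μ n) fun w => b / 2 ≤ Z n w) atTop
      (𝓝 (b / 2 + C * 0)) := ((h _ (half_pos hb)).const_mul C).const_add _
  filter_upwards [hlim.eventually (gt_mem_nhds (by linarith : b / 2 + C * 0 < b))] with n hn
  exact (sum_mul_le_add_mul_probOf (hμ n) (hZC n) (half_pos hb).le).trans_lt hn

end Events

section JointType

variable {α : Type} {n : ℕ}

open Classical in
theorem jointType_eq_inv_mul_sum (s : Fin n → α) (a : α) :
    jointType n s a = (n : ℝ)⁻¹ * ∑ t, if s t = a then 1 else 0 := by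
  rw [jointType, Finset.sum_boole, div_eq_inv_mul]

open Classical in
theorem natCast_mul_jointType (s : Fin n → α) (a : α) :
    (n : ℝ) * jointType n s a = ∑ t, if s t = a then 1 else 0 := by
  rcases eq_or_ne n 0 with rfl | hn
  · simp
  · rw [jointType_eq_inv_mul_sum, mul_inv_cancel_left₀ (Nat.cast_ne_zero.2 hn)]

theorem jointType_nonneg (s : Fin n → α) (a : α) : 0 ≤ jointType n s a := by
  unfold jointType
  positivity

theorem jointType_le_one (s : Fin n → α) (a : α) : jointType n s a ≤ 1 := by
  classical
  rcases Nat.eq_zero_or_pos n with rfl | hn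
  · simp [jointType]
  · rw [jointType, div_le_one (by exact_mod_cast hn)]
    exact_mod_cast (Finset.card_filter_le _ _).trans_eq (Finset.card_fin n)

theorem inv_mul_sum_eq_sum_jointType_mul [Fintype α] (s : Fin n → α) (f : α → ℝ) :
    (n : ℝ)⁻¹ * ∑ t, f (s t) = ∑ a, jointType n s a * f a := by
  classical
  simp_rw [jointType_eq_inv_mul_sum, mul_assoc, ← Finset.mul_sum, Finset.sum_mul]
  rw [Finset.sum_comm]
  congr 1
  refine Finset.sum_congr rfl fun t _ => ?_
  simp only [ite_mul, one_mul, zero_mul]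
  rw [Finset.sum_ite_eq]
  simp

theorem sum_jointType_fst {β : Type} [Fintype α] [Fintype β] (s : Fin n → α × β) (x : α) :
    ∑ y, jointType n s (x, y) = jointType n (fun t => (s t).1) x := by
  classical
  have := inv_mul_sum_eq_sum_jointType_mul s fun a => if a.1 = x then 1 else 0
  rw [← jointType_eq_inv_mul_sum, Fintype.sum_prod_type] at this
  simp [this]

theorem sum_iid_mul_jointType [Fintype α] {p : α → ℝ} (hp : IsPMF p) (hn : 0 < n) (x : α) :
    ∑ v : Fin n → α, iid p (Fin n) v * jointType n v x = p x := by
  classical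
  simp_rw [jointType_eq_inv_mul_sum, Finset.mul_sum, mul_left_comm _ (n : ℝ)⁻¹]
  rw [Finset.sum_comm]
  simp_rw [← Finset.mul_sum]
  rw [Finset.sum_congr rfl fun i _ => sum_iid_mul_apply hp i fun c => if c = x then (1 : ℝ) else 0]
  simp [hn.ne']

end JointType

theorem abs_sub_le_two_mul_tv {α : Type} [Fintype α] (p q : α → ℝ) (a : α) :
    |p a - q a| ≤ 2 * tv p q := by
  rw [tv, ← mul_assoc, show (2 : ℝ) * (1 / 2) = 1 by norm_num, one_mul]
  exact Finset.single_le_sum (f := fun b => |p b - q b|) (fun b _ => abs_nonneg _)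
    (Finset.mem_univ a)

theorem sq_le_card_mul_sum_sq_of_le_tv {β : Type} [Fintype β] {J A P : β → ℝ} {ε : ℝ}
    (hJA : ∑ b, |J b - A b| ≤ ε) (hε : ε ≤ tv J P) :
    ε ^ 2 ≤ Fintype.card β * ∑ b, (A b - P b) ^ 2 := by
  have hAP : ε ≤ ∑ b, |A b - P b| := by
    have : ∑ b, |J b - P b| ≤ ∑ b, |J b - A b| + ∑ b, |A b - P b| := by
      rw [← Finset.sum_add_distrib]
      exact Finset.sum_le_sum fun b _ => abs_sub_le _ _ _
    rw [tv] at hε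
    linarith
  have h0 : 0 ≤ ε := (Finset.sum_nonneg fun b _ => abs_nonneg _).trans hJA
  calc ε ^ 2 ≤ (∑ b, |A b - P b|) ^ 2 := pow_le_pow_left₀ h0 hAP 2
    _ ≤ Fintype.card β * ∑ b, |A b - P b| ^ 2 := by
        simpa using sq_sum_le_card_mul_sum_sq (s := Finset.univ) (f := fun b => |A b - P b|)
    _ = Fintype.card β * ∑ b, (A b - P b) ^ 2 := by simp_rw [sq_abs]

section Codes

variable {𝒳 𝒴 : Type} [Fintype 𝒳] {p0 : 𝒳 → ℝ} {n : ℕ}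

noncomputable def expectedJointType (p0 : 𝒳 → ℝ) {n : ℕ} (f : (Fin n → 𝒳) → Fin n → 𝒴)
    (a : 𝒳 × 𝒴) : ℝ :=
  ∑ xs, iid p0 (Fin n) xs * jointType n (fun t => (xs t, f xs t)) a

theorem expectedJointType_nonneg (hp0 : IsPMF p0) (f : (Fin n → 𝒳) → Fin n → 𝒴)
    (a : 𝒳 × 𝒴) : 0 ≤ expectedJointType p0 f a :=
  Finset.sum_nonneg fun xs _ => mul_nonneg ((hp0.iid _).1 xs) (jointType_nonneg _ a)

theorem expectedJointType_le_one (hp0 : IsPMF p0) (f : (Fin n → 𝒳) → Fin n → 𝒴)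
    (a : 𝒳 × 𝒴) : expectedJointType p0 f a ≤ 1 :=
  calc expectedJointType p0 f a ≤ ∑ xs, iid p0 (Fin n) xs * 1 :=
        Finset.sum_le_sum fun xs _ =>
          mul_le_mul_of_nonneg_left (jointType_le_one _ a) ((hp0.iid _).1 xs)
    _ = 1 := by simp [(hp0.iid _).2]

variable [Fintype 𝒴]

theorem sum_expectedJointType_fst (hp0 : IsPMF p0) (hn : 0 < n)
    (f : (Fin n → 𝒳) → Fin n → 𝒴) (x : 𝒳) : ∑ y, expectedJointType p0 f (x, y) = p0 x := by
  simp only [expectedJointType]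
  rw [Finset.sum_comm]
  simp_rw [← Finset.mul_sum, sum_jointType_fst]
  exact sum_iid_mul_jointType hp0 hn x

theorem sum_iid_mul_avg_eq_sum_expectedJointType_mul (f : (Fin n → 𝒳) → Fin n → 𝒴)
    (d : 𝒳 → 𝒴 → ℝ) :
    ∑ xs, iid p0 (Fin n) xs * ((n : ℝ)⁻¹ * ∑ t, d (xs t) (f xs t))
      = ∑ a, expectedJointType p0 f a * d a.1 a.2 := by
  rw [Finset.sum_congr rfl fun xs _ => by
    rw [inv_mul_sum_eq_sum_jointType_mul (fun t => (xs t, f xs t)) fun a => d a.1 a.2]]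
  simp_rw [expectedJointType, Finset.mul_sum, Finset.sum_mul, mul_assoc]
  exact Finset.sum_comm

theorem tendsto_expectedJointType (hp0 : IsPMF p0) {f : ∀ n, (Fin n → 𝒳) → Fin n → 𝒴}
    {P : 𝒳 × 𝒴 → ℝ} (h : ∀ ε > 0, Tendsto (fun n => probOf (iid p0 (Fin n)) fun xs =>
      ε ≤ tv (jointType n fun t => (xs t, f n xs t)) P) atTop (𝓝 0)) :
    Tendsto (fun n => expectedJointType p0 (f n)) atTop (𝓝 P) := by
  set Z : ∀ n, (Fin n → 𝒳) → ℝ := fun n xs => tv (jointType n fun t => (xs t, f n xs t)) P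
  have hZ0 : ∀ n xs, 0 ≤ Z n xs := fun n xs => by simp only [Z, tv]; positivity
  have hZC : ∀ n xs, Z n xs ≤ ∑ a, (1 + |P a|) := fun n xs =>
    calc Z n xs ≤ ∑ a, (1 + |P a|) / 2 := by
          simp only [Z, tv, Finset.mul_sum]
          refine Finset.sum_le_sum fun a _ => ?_
          have h1 := jointType_le_one (fun t => (xs t, f n xs t)) a
          have h0 := jointType_nonneg (fun t => (xs t, f n xs t)) a
          linarith [abs_sub (jointType n (fun t => (xs t, f n xs t)) a) (P a), abs_of_nonneg h0]
      _ ≤ ∑ a, (1 + |P a|) := by gcongr; linarith [abs_nonneg (P ‹_›)]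
  have hmean := tendsto_sum_mul_of_tendsto_probOf (fun n => hp0.iid (Fin n)) hZ0 hZC h
  refine tendsto_pi_nhds.2 fun a => ?_
  rw [tendsto_iff_norm_sub_tendsto_zero]
  refine squeeze_zero (fun _ => norm_nonneg _) (fun n => ?_) (by simpa using hmean.const_mul 2)
  calc ‖expectedJointType p0 (f n) a - P a‖
      = |∑ xs, iid p0 (Fin n) xs * (jointType n (fun t => (xs t, f n xs t)) a - P a)| := by
        simp [expectedJointType, mul_sub, Finset.sum_sub_distrib, ← Finset.sum_mul,
          (hp0.iid _).2]
    _ ≤ ∑ xs, iid p0 (Fin n) xs * (2 * Z n xs) := by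
        refine (Finset.abs_sum_le_sum_abs _ _).trans (Finset.sum_le_sum fun xs _ => ?_)
        rw [abs_mul, abs_of_nonneg ((hp0.iid _).1 xs)]
        exact mul_le_mul_of_nonneg_left (abs_sub_le_two_mul_tv _ _ a) ((hp0.iid _).1 xs)
    _ = 2 * ∑ xs, iid p0 (Fin n) xs * Z n xs := by
        rw [Finset.mul_sum]
        exact Finset.sum_congr rfl fun xs _ => by ring

def expectedDistortion (p0 : 𝒳 → ℝ) (d : 𝒳 → 𝒴 → ℝ) (q : 𝒳 → 𝒴 → ℝ) : ℝ :=
  ∑ x, ∑ y, p0 x * q x y * d x y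

@[fun_prop]
theorem continuous_expectedDistortion (d : 𝒳 → 𝒴 → ℝ) :
    Continuous (expectedDistortion p0 d) := by
  unfold expectedDistortion
  fun_prop

theorem RDAchievable.mono {d : 𝒳 → 𝒴 → ℝ} {R D D' : ℝ} (h : RDAchievable p0 d R D)
    (hD : D ≤ D') : RDAchievable p0 d R D' :=
  let ⟨enc, dec, hlim⟩ := h
  ⟨enc, dec, hlim.trans hD⟩

theorem rdAchievable_of_twoNodeAchievable (hp0 : IsPMF p0) {R : ℝ} {q : 𝒳 → 𝒴 → ℝ}
    (h : TwoNodeAchievable p0 R q) (d : 𝒳 → 𝒴 → ℝ) :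
    RDAchievable p0 d R (expectedDistortion p0 d q) := by
  obtain ⟨enc, dec, hconv⟩ := h
  refine ⟨enc, dec, le_of_eq (Tendsto.limsup_eq ?_)⟩
  have hP := tendsto_pi_nhds.1
    (tendsto_expectedJointType hp0 (f := fun n xs => dec n (enc n xs)) hconv)
  rw [expectedDistortion, ← Fintype.sum_prod_type' fun x y => p0 x * q x y * d x y]
  exact (tendsto_finsetSum _ fun a _ => (hP a).mul_const (d a.1 a.2)).congr fun n =>
    (sum_iid_mul_avg_eq_sum_expectedJointType_mul _ d).symm

theorem mem_rdRegion_of_mem_twoNodeCapacity (hp0 : IsPMF p0) {d : 𝒳 → 𝒴 → ℝ} {R D : ℝ}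
    {q : 𝒳 → 𝒴 → ℝ} (hcap : (R, q) ∈ twoNodeCapacity p0)
    (hle : expectedDistortion p0 d q ≤ D) : (R, D) ∈ rdRegion (𝒴 := 𝒴) p0 d := by
  let f := fun v : ℝ × (𝒳 → 𝒴 → ℝ) =>
    (v.1, expectedDistortion p0 d v.2 + (D - expectedDistortion p0 d q))
  have hmaps : Set.MapsTo f {v | 0 ≤ v.1 ∧ (∀ x, IsPMF (v.2 x)) ∧ TwoNodeAchievable p0 v.1 v.2}
      {v | 0 ≤ v.1 ∧ RDAchievable (𝒴 := 𝒴) p0 d v.1 v.2} := by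
    rintro v ⟨hR, -, hach⟩
    exact ⟨hR, (rdAchievable_of_twoNodeAchievable hp0 hach d).mono
      (le_add_of_nonneg_right (sub_nonneg.2 hle))⟩
  have hf : f (R, q) = (R, D) := by simp [f]
  exact hf ▸ map_mem_closure (by fun_prop) hcap hmaps

end Codes

section Blocks

variable {α : Type} {n m : ℕ}

def blockSplit (n m : ℕ) : Fin m ≃ (Fin (m / n) × Fin n) ⊕ Fin (m % n) :=
  (finCongr (by rw [mul_comm, Nat.div_add_mod])).trans
    (finSumFinEquiv.symm.trans (Equiv.sumCongr finProdFinEquiv.symm (Equiv.refl _)))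

def blocks (n m : ℕ) (xs : Fin m → α) (i : Fin (m / n)) (j : Fin n) : α :=
  xs ((blockSplit n m).symm (Sum.inl (i, j)))

def blockDecode {M β : Type} (dc : M → Fin n → β) (y0 : β) (m : ℕ) (c : Fin (m / n) → M) :
    Fin m → β :=
  fun t => Sum.elim (fun ij => dc (c ij.1) ij.2) (fun _ => y0) (blockSplit n m t)

theorem blocks_blockDecode {M β : Type} (dc : M → Fin n → β) (y0 : β) (c : Fin (m / n) → M)
    (i : Fin (m / n)) : blocks n m (blockDecode dc y0 m c) i = dc (c i) := by
  ext j
  simp [blocks, blockDecode]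

theorem sum_iid_mul_comp_blocks [Fintype α] {p : α → ℝ} (hp : IsPMF p)
    (G : (Fin (m / n) → Fin n → α) → ℝ) :
    ∑ xs : Fin m → α, iid p (Fin m) xs * G (blocks n m xs)
      = ∑ B : Fin (m / n) → Fin n → α, iid (iid p (Fin n)) (Fin (m / n)) B * G B := by
  refine (sum_iid_mul_comp_sumInl hp (blockSplit n m) (G ∘ Equiv.curry _ _ _)).trans ?_
  rw [← (Equiv.curry _ _ _).symm.sum_comp]
  refine Finset.sum_congr rfl fun B _ => ?_
  simp [iid, Fintype.prod_prod_type]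

open Classical in
theorem natCast_mul_jointType_eq_sum_blocks (s : Fin m → α) (a : α) :
    (m : ℝ) * jointType m s a = n * ∑ i, jointType n (blocks n m s i) a +
      ∑ l, if s ((blockSplit n m).symm (Sum.inr l)) = a then 1 else 0 := by
  simp_rw [Finset.mul_sum, natCast_mul_jointType]
  rw [← (blockSplit n m).symm.sum_comp, Fintype.sum_sum_type, Fintype.sum_prod_type]
  rfl

theorem abs_jointType_sub_avg_blocks_le (hn : 0 < n) (hnm : n ≤ m) (s : Fin m → α) (a : α) :
    |jointType m s a - ((m / n : ℕ) : ℝ)⁻¹ * ∑ i, jointType n (blocks n m s i) a|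
      ≤ n / m := by
  classical
  have hsplit := natCast_mul_jointType_eq_sum_blocks (n := n) s a
  set S := ∑ i, jointType n (blocks n m s i) a
  set rest : ℝ := ∑ l, if s ((blockSplit n m).symm (Sum.inr l)) = a then 1 else 0
  set k : ℝ := ((m / n : ℕ) : ℝ)
  set r : ℝ := ((m % n : ℕ) : ℝ)
  have hk : 0 < k := by simpa [k] using Nat.div_pos hnm hn
  have hm : (m : ℝ) = k * n + r := by
    simp only [k, r]
    exact_mod_cast (Nat.div_add_mod' m n).symm
  have hrn : r ≤ n := by simpa [r] using (Nat.mod_lt m hn).le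
  have hS0 : 0 ≤ S := Finset.sum_nonneg fun i _ => jointType_nonneg _ a
  have hS : S ≤ k := by
    simpa [S, k] using Finset.sum_le_sum fun i (_ : i ∈ Finset.univ) =>
      jointType_le_one (blocks n m s i) a
  have hrest0 : 0 ≤ rest := Finset.sum_nonneg fun l _ => by split_ifs <;> norm_num
  have hrest : rest ≤ r := by
    simpa [rest, r] using Finset.sum_le_sum fun l (_ : l ∈ Finset.univ) =>
      show (if s ((blockSplit n m).symm (Sum.inr l)) = a then (1 : ℝ) else 0) ≤ 1 by
        split_ifs <;> norm_num
  have hmpos : (0 : ℝ) < m := by exact_mod_cast hn.trans_le hnm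
  have key : jointType m s a - k⁻¹ * S = (k * rest - r * S) / (m * k) := by
    field_simp
    linear_combination k * hsplit - S * hm
  rw [key, abs_div, abs_of_pos (mul_pos hmpos hk), div_le_div_iff₀ (mul_pos hmpos hk) hmpos]
  have : |k * rest - r * S| ≤ k * n - 0 :=
    abs_sub_le_of_le_of_le (by positivity) (by nlinarith) (by positivity) (by nlinarith)
  nlinarith

end Blocks

section BlockCode

variable {𝒳 𝒴 : Type} [Fintype 𝒳] [Fintype 𝒴] {p0 : 𝒳 → ℝ} {n m : ℕ}
  (F : (Fin n → 𝒳) → Fin n → 𝒴)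

theorem sum_iid_mul_sum_sq_avg_sub_le (hp0 : IsPMF p0) (hn : 0 < n) (hnm : n ≤ m) :
    ∑ xs : Fin m → 𝒳, iid p0 (Fin m) xs * ∑ a, (((m / n : ℕ) : ℝ)⁻¹ *
        ∑ i, jointType n (fun j => (blocks n m xs i j, F (blocks n m xs i) j)) a
        - expectedJointType p0 F a) ^ 2
      ≤ Fintype.card (𝒳 × 𝒴) / (m / n : ℕ) := by
  have hk : ((m / n : ℕ) : ℝ) ≠ 0 := Nat.cast_ne_zero.2 (Nat.div_pos hnm hn).ne'
  set T : (Fin n → 𝒳) → 𝒳 × 𝒴 → ℝ := fun v => jointType n fun j => (v j, F v j)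
  have hT : ∀ v a, |T v a - expectedJointType p0 F a| ≤ 1 := fun v a =>
    (abs_sub_le_of_le_of_le (jointType_nonneg _ a) (jointType_le_one _ a)
      (expectedJointType_nonneg hp0 F a) (expectedJointType_le_one hp0 F a)).trans_eq
      (sub_zero 1)
  have hmean : ∀ a, ∑ v, iid p0 (Fin n) v * (T v a - expectedJointType p0 F a) = 0 := fun a => by
    simp [T, mul_sub, Finset.sum_sub_distrib, ← Finset.sum_mul, (hp0.iid _).2, expectedJointType]
  have hterm : ∀ a, ∑ xs : Fin m → 𝒳, iid p0 (Fin m) xs *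
      (((m / n : ℕ) : ℝ)⁻¹ * ∑ i, T (blocks n m xs i) a - expectedJointType p0 F a) ^ 2
      ≤ 1 / (m / n : ℕ) := fun a =>
    calc _ = ∑ B : Fin (m / n) → Fin n → 𝒳, iid (iid p0 (Fin n)) (Fin (m / n)) B *
          ((Fintype.card (Fin (m / n)) : ℝ)⁻¹ *
            ∑ i, (T (B i) a - expectedJointType p0 F a)) ^ 2 := by
          rw [sum_iid_mul_comp_blocks hp0
            fun B => (((m / n : ℕ) : ℝ)⁻¹ * ∑ i, T (B i) a - expectedJointType p0 F a) ^ 2]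
          simp [Finset.sum_sub_distrib, mul_sub, hk]
      _ ≤ 1 ^ 2 / Fintype.card (Fin (m / n)) :=
          sum_iid_mul_sq_avg_le (hp0.iid _) (hmean a) (hT · a)
      _ = 1 / (m / n : ℕ) := by simp
  calc _ = ∑ a, ∑ xs : Fin m → 𝒳, iid p0 (Fin m) xs *
        (((m / n : ℕ) : ℝ)⁻¹ * ∑ i, T (blocks n m xs i) a - expectedJointType p0 F a) ^ 2 := by
        simp_rw [Finset.mul_sum]
        exact Finset.sum_comm
    _ ≤ ∑ a : 𝒳 × 𝒴, 1 / ((m / n : ℕ) : ℝ) := Finset.sum_le_sum fun a _ => hterm a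
    _ = _ := by rw [Finset.sum_const, Finset.card_univ, nsmul_eq_mul, mul_one_div]

theorem probOf_tv_blockDecode_le (hp0 : IsPMF p0) (hn : 0 < n) (hnm : n ≤ m) (y0 : 𝒴)
    {ε : ℝ} (hε : 0 < ε) (hm : Fintype.card (𝒳 × 𝒴) * n / m ≤ ε) :
    probOf (iid p0 (Fin m)) (fun xs => ε ≤ tv
        (jointType m fun t => (xs t, blockDecode F y0 m (blocks n m xs) t))
        (expectedJointType p0 F))
      ≤ Fintype.card (𝒳 × 𝒴) ^ 2 / ((m / n : ℕ) * ε ^ 2) := by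
  set c : ℝ := (Fintype.card (𝒳 × 𝒴) : ℝ)
  set W : (Fin m → 𝒳) → ℝ := fun xs => ∑ a, (((m / n : ℕ) : ℝ)⁻¹ *
    ∑ i, jointType n (fun j => (blocks n m xs i j, F (blocks n m xs i) j)) a
      - expectedJointType p0 F a) ^ 2
  have hblocks : ∀ xs i, blocks n m (fun t => (xs t, blockDecode F y0 m (blocks n m xs) t)) i
      = fun j => (blocks n m xs i j, F (blocks n m xs i) j) := fun xs i =>
    funext fun j => Prod.ext rfl (congrFun (blocks_blockDecode F y0 _ i) j)
  have hevent : ∀ xs, ε ≤ tv (jointType m fun t => (xs t, blockDecode F y0 m (blocks n m xs) t))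
      (expectedJointType p0 F) → ε ^ 2 ≤ c * W xs := fun xs h => by
    refine sq_le_card_mul_sum_sq_of_le_tv (le_trans ?_ hm) h
    calc _ ≤ ∑ _a : 𝒳 × 𝒴, (n : ℝ) / m := Finset.sum_le_sum fun a _ => by
          simpa only [hblocks] using abs_jointType_sub_avg_blocks_le hn hnm
            (fun t => (xs t, blockDecode F y0 m (blocks n m xs) t)) a
      _ = c * n / m := by rw [Finset.sum_const, Finset.card_univ, nsmul_eq_mul, mul_div_assoc]
  have hW : ∀ xs, 0 ≤ c * W xs := fun xs => by positivity
  calc _ ≤ probOf (iid p0 (Fin m)) (fun xs => ε ^ 2 ≤ c * W xs) :=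
        probOf_mono (hp0.iid _).1 hevent
    _ ≤ (∑ xs, iid p0 (Fin m) xs * (c * W xs)) / ε ^ 2 :=
        probOf_le_sum_mul_div (hp0.iid _).1 hW (by positivity)
    _ ≤ c * (c / (m / n : ℕ)) / ε ^ 2 := by
        simp_rw [mul_left_comm _ c, ← Finset.mul_sum]
        gcongr
        exact sum_iid_mul_sum_sq_avg_sub_le F hp0 hn hnm
    _ = c ^ 2 / ((m / n : ℕ) * ε ^ 2) := by ring

theorem tendsto_probOf_tv_blockDecode (hp0 : IsPMF p0) (hn : 0 < n) (y0 : 𝒴) {ε : ℝ}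
    (hε : 0 < ε) :
    Tendsto (fun m => probOf (iid p0 (Fin m)) fun xs => ε ≤ tv
        (jointType m fun t => (xs t, blockDecode F y0 m (blocks n m xs) t))
        (expectedJointType p0 F)) atTop (𝓝 0) := by
  have hblocks : Tendsto (fun m : ℕ => ((m / n : ℕ) : ℝ)) atTop atTop :=
    tendsto_natCast_atTop_atTop.comp <| tendsto_atTop.2 fun K =>
      eventually_atTop.2 ⟨K * n, fun m hm => (Nat.le_div_iff_mul_le hn).2 hm⟩
  refine tendsto_of_tendsto_of_tendsto_of_le_of_le' tendsto_const_nhds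
    ((tendsto_const_nhds (x := (Fintype.card (𝒳 × 𝒴) : ℝ) ^ 2)).div_atTop
      (hblocks.atTop_mul_const (pow_pos hε 2)))
    (Eventually.of_forall fun m => probOf_nonneg (hp0.iid _).1 _) ?_
  filter_upwards [eventually_ge_atTop n, (tendsto_const_div_atTop_nhds_zero_nat
    (Fintype.card (𝒳 × 𝒴) * n : ℝ)).eventually (eventually_le_nhds hε)] with m hnm hm
  exact probOf_tv_blockDecode_le F hp0 hn hnm y0 hε hm

end BlockCode

theorem msgCount_pos (n : ℕ) (R : ℝ) : 0 < msgCount n R :=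
  Nat.ceil_pos.mpr (Real.rpow_pos_of_pos two_pos _)

theorem msgCount_pow_div_le {R : ℝ} (hR : 0 ≤ R) {n : ℕ} (hn : 0 < n) (m : ℕ) :
    msgCount n R ^ (m / n) ≤ msgCount m (R + 1 / n) := by
  have hN : (msgCount n R : ℝ) ≤ 2 ^ ((n : ℝ) * R + 1) := by
    have : (1 : ℝ) ≤ 2 ^ ((n : ℝ) * R) := Real.one_le_rpow (by norm_num) (by positivity)
    calc (msgCount n R : ℝ) ≤ 2 ^ ((n : ℝ) * R) + 1 := (Nat.ceil_lt_add_one (by positivity)).le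
      _ ≤ 2 ^ ((n : ℝ) * R + 1) := by rw [Real.rpow_add_one two_ne_zero]; linarith
  have hexp : ((n : ℝ) * R + 1) * (m / n : ℕ) ≤ m * (R + 1 / n) := by
    have hkn : ((m / n : ℕ) : ℝ) * n ≤ m := by exact_mod_cast Nat.div_mul_le_self m n
    have hk : ((m / n : ℕ) : ℝ) ≤ m / n := by rw [le_div_iff₀ (by exact_mod_cast hn)]; exact hkn
    rw [mul_add, mul_one_div]
    nlinarith
  have : (msgCount n R : ℝ) ^ (m / n) ≤ msgCount m (R + 1 / n) :=
    calc _ ≤ ((2 : ℝ) ^ ((n : ℝ) * R + 1)) ^ (m / n) := pow_le_pow_left₀ (Nat.cast_nonneg _) hN _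
      _ = 2 ^ (((n : ℝ) * R + 1) * (m / n : ℕ)) := by
          rw [← Real.rpow_natCast, ← Real.rpow_mul zero_le_two]
      _ ≤ 2 ^ ((m : ℝ) * (R + 1 / n)) := Real.rpow_le_rpow_of_exponent_le one_le_two hexp
      _ ≤ _ := Nat.le_ceil _
  exact_mod_cast this

section Achievability

variable {𝒳 𝒴 : Type} [Fintype 𝒳] [Fintype 𝒴] {p0 : 𝒳 → ℝ}

theorem twoNodeAchievable_of_card_le [Nonempty 𝒴] {R : ℝ} {q : 𝒳 → 𝒴 → ℝ} {M : ℕ → Type}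
    [∀ m, Fintype (M m)] (hM : ∀ m, Fintype.card (M m) ≤ msgCount m R)
    (enc : ∀ m, (Fin m → 𝒳) → M m) (dec : ∀ m, M m → Fin m → 𝒴)
    (h : ∀ ε > 0, Tendsto (fun m => probOf (iid p0 (Fin m)) fun xs =>
      ε ≤ tv (jointType m fun t => (xs t, dec m (enc m xs) t)) fun a => p0 a.1 * q a.1 a.2)
      atTop (𝓝 0)) :
    TwoNodeAchievable p0 R q := by
  let emb : ∀ m, M m ↪ Fin (msgCount m R) := fun m =>
    (Fintype.equivFin (M m)).toEmbedding.trans (Fin.castLEEmb (hM m))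
  refine ⟨fun m xs => emb m (enc m xs),
    fun m => Function.extend (emb m) (dec m) fun _ _ => Classical.arbitrary 𝒴, fun ε hε => ?_⟩
  simp only [(emb _).injective.extend_apply]
  exact h ε hε

theorem twoNodeAchievable_blockCode (hp0 : IsPMF p0) {R : ℝ} (hR : 0 ≤ R) {n : ℕ} (hn : 0 < n)
    (e : (Fin n → 𝒳) → Fin (msgCount n R)) (dc : Fin (msgCount n R) → Fin n → 𝒴)
    {q : 𝒳 → 𝒴 → ℝ}
    (hq : ∀ x y, p0 x * q x y = expectedJointType p0 (fun xs => dc (e xs)) (x, y)) :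
    TwoNodeAchievable p0 (R + 1 / n) q := by
  have y0 : 𝒴 := dc ⟨0, msgCount_pos n R⟩ ⟨0, hn⟩
  have : Nonempty 𝒴 := ⟨y0⟩
  refine twoNodeAchievable_of_card_le (M := fun m => Fin (m / n) → Fin (msgCount n R))
    (fun m => by simpa using msgCount_pow_div_le hR hn m) (fun m xs i => e (blocks n m xs i))
    (fun m => blockDecode dc y0 m) fun ε hε => ?_
  simp only [hq, Prod.mk.eta]
  exact tendsto_probOf_tv_blockDecode (fun xs => dc (e xs)) hp0 hn y0 hε

end Achievability

section Region

variable {𝒳 𝒴 : Type} [Fintype 𝒴] {p0 : 𝒳 → ℝ}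

/-- Uniform where `p0 x = 0`, so that every row is a pmf. -/
noncomputable def condPMF (p0 : 𝒳 → ℝ) (P : 𝒳 × 𝒴 → ℝ) (x : 𝒳) (y : 𝒴) : ℝ :=
  if p0 x = 0 then (Fintype.card 𝒴 : ℝ)⁻¹ else P (x, y) / p0 x

theorem isPMF_condPMF [Nonempty 𝒴] {P : 𝒳 × 𝒴 → ℝ} (hP : ∀ a, 0 ≤ P a)
    (hmarg : ∀ x, ∑ y, P (x, y) = p0 x) (x : 𝒳) : IsPMF (condPMF p0 P x) := by
  by_cases hx : p0 x = 0
  · exact ⟨fun y => by simp [condPMF, hx], by simp [condPMF, hx]⟩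
  · refine ⟨fun y => ?_, by simp [condPMF, hx, ← Finset.sum_div, hmarg x]⟩
    simpa [condPMF, hx] using
      div_nonneg (hP (x, y)) (hmarg x ▸ Finset.sum_nonneg fun y _ => hP _)

theorem mul_condPMF {P : 𝒳 × 𝒴 → ℝ} (hP : ∀ a, 0 ≤ P a) (hmarg : ∀ x, ∑ y, P (x, y) = p0 x)
    (x : 𝒳) (y : 𝒴) : p0 x * condPMF p0 P x y = P (x, y) := by
  by_cases hx : p0 x = 0
  · have := Finset.single_le_sum (f := fun y => P (x, y)) (fun y _ => hP _) (Finset.mem_univ y)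
    simp only [hmarg, hx] at this
    simp [condPMF, hx, le_antisymm this (hP _)]
  · simp [condPMF, hx, mul_div_cancel₀]

theorem isCompact_condPMFs : IsCompact {q : 𝒳 → 𝒴 → ℝ | ∀ x, IsPMF (q x)} := by
  simpa [Set.pi, IsPMF, stdSimplex] using
    isCompact_univ_pi fun _ : 𝒳 => isCompact_stdSimplex ℝ 𝒴

variable [Fintype 𝒳]

def capacityDistortionRegion (p0 : 𝒳 → ℝ) (d : 𝒳 → 𝒴 → ℝ) : Set (ℝ × ℝ) :=
  {v | ∃ q : 𝒳 → 𝒴 → ℝ, (∀ x, IsPMF (q x)) ∧ (v.1, q) ∈ twoNodeCapacity p0 ∧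
    expectedDistortion p0 d q ≤ v.2}

theorem isClosed_capacityDistortionRegion (d : 𝒳 → 𝒴 → ℝ) :
    IsClosed (capacityDistortionRegion p0 d) := by
  set K := {q : 𝒳 → 𝒴 → ℝ | ∀ x, IsPMF (q x)}
  have : CompactSpace K := isCompact_iff_compactSpace.mp isCompact_condPMFs
  have hclosed : IsClosed {z : (ℝ × ℝ) × K | (z.1.1, z.2.1) ∈ twoNodeCapacity p0 ∧
      expectedDistortion p0 d z.2 ≤ z.1.2} :=
    (isClosed_closure.preimage (by fun_prop)).inter
      (isClosed_le ((continuous_expectedDistortion d).comp (by fun_prop)) (by fun_prop))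
  convert isClosedMap_fst_of_compactSpace _ hclosed
  ext v
  constructor
  · rintro ⟨q, hq, hcap, hle⟩
    exact ⟨(v, ⟨q, hq⟩), ⟨hcap, hle⟩, rfl⟩
  · rintro ⟨⟨v, q, hq⟩, ⟨hcap, hle⟩, rfl⟩
    exact ⟨q, hq, hcap, hle⟩

end Region

theorem IsClosed.mem_of_limsup_le {T : Set (ℝ × ℝ)} (hT : IsClosed T)
    (hup : ∀ r D D', (r, D) ∈ T → D ≤ D' → (r, D') ∈ T) {r f : ℕ → ℝ} {R D : ℝ}
    (hr : Tendsto r atTop (𝓝 R)) (hf : IsBoundedUnder (· ≤ ·) atTop f)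
    (hmem : ∀ᶠ n in atTop, (r n, f n) ∈ T) (hlim : limsup f atTop ≤ D) : (R, D) ∈ T := by
  have hshift : ∀ ε > 0, (R, D + ε) ∈ T := fun ε hε =>
    hT.mem_of_tendsto (hr.prodMk_nhds tendsto_const_nhds) <| by
      filter_upwards [hmem,
        eventually_lt_of_limsup_lt (hlim.trans_lt (lt_add_of_pos_right D hε)) hf]
        with n hn hlt using hup _ _ _ hn hlt.le
  refine hT.mem_of_tendsto (f := fun ε => (R, D + ε)) (b := 𝓝[>] 0) ?_
    (eventually_nhdsWithin_of_forall hshift)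
  exact tendsto_nhdsWithin_of_tendsto_nhds (by simpa using (continuous_const.prodMk
    (continuous_const.add continuous_id)).tendsto (0 : ℝ))

theorem mem_capacityDistortionRegion_of_rdAchievable {𝒳 𝒴 : Type} [Fintype 𝒳] [Fintype 𝒴]
    {p0 : 𝒳 → ℝ} (hp0 : IsPMF p0) {d : 𝒳 → 𝒴 → ℝ} {R D : ℝ} (hR : 0 ≤ R)
    (h : RDAchievable p0 d R D) : (R, D) ∈ capacityDistortionRegion p0 d := by
  obtain ⟨enc, dec, hlim⟩ := h
  set P : ∀ n, 𝒳 × 𝒴 → ℝ := fun n => expectedJointType p0 fun xs => dec n (enc n xs)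
  have hf : ∀ n, ∑ xs : Fin n → 𝒳,
      (∏ t, p0 (xs t)) * ((n : ℝ)⁻¹ * ∑ t, d (xs t) (dec n (enc n xs) t))
      = ∑ a, P n a * d a.1 a.2 := fun n => sum_iid_mul_avg_eq_sum_expectedJointType_mul _ d
  simp only [hf] at hlim
  have : Nonempty 𝒴 := ⟨dec 1 ⟨0, msgCount_pos 1 R⟩ 0⟩
  have hbdd : IsBoundedUnder (· ≤ ·) atTop fun n => ∑ a, P n a * d a.1 a.2 :=
    isBoundedUnder_of ⟨∑ a : 𝒳 × 𝒴, |d a.1 a.2|, fun n => Finset.sum_le_sum fun a _ =>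
      (le_abs_self _).trans <| by
        rw [abs_mul, abs_of_nonneg (expectedJointType_nonneg hp0 _ a)]
        exact mul_le_of_le_one_left (abs_nonneg _) (expectedJointType_le_one hp0 _ a)⟩
  have hmem : ∀ᶠ n : ℕ in atTop,
      (R + 1 / (n : ℝ), ∑ a, P n a * d a.1 a.2) ∈ capacityDistortionRegion p0 d := by
    filter_upwards [eventually_gt_atTop 0] with n hn
    have hP0 : ∀ a, 0 ≤ P n a := expectedJointType_nonneg hp0 _
    have hmarg : ∀ x, ∑ y, P n (x, y) = p0 x := sum_expectedJointType_fst hp0 hn _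
    refine ⟨condPMF p0 (P n), isPMF_condPMF hP0 hmarg, subset_closure
      ⟨by positivity, isPMF_condPMF hP0 hmarg,
        twoNodeAchievable_blockCode hp0 hR hn (enc n) (dec n) (mul_condPMF hP0 hmarg)⟩,
      le_of_eq ?_⟩
    simp_rw [expectedDistortion, mul_condPMF hP0 hmarg, Fintype.sum_prod_type]
  exact (isClosed_capacityDistortionRegion d).mem_of_limsup_le
    (fun r D D' ⟨q, hq, hcap, hle⟩ hDD' => ⟨q, hq, hcap, hle.trans hDD'⟩)
    (by simpa using tendsto_one_div_atTop_nhds_zero_nat.const_add R) hbdd hmem hlim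

theorem rate_distortion_projection_general {𝒳 𝒴 : Type} [Fintype 𝒳] [Fintype 𝒴]
    (p0 : 𝒳 → ℝ) (hp0 : IsPMF p0) (d : 𝒳 → 𝒴 → ℝ)
    (R D : ℝ) :
    (R, D) ∈ rdRegion (𝒴 := 𝒴) p0 d ↔
      ∃ q : 𝒳 → 𝒴 → ℝ, (∀ x, IsPMF (q x)) ∧ (R, q) ∈ twoNodeCapacity p0 ∧
        (∑ x, ∑ y, p0 x * q x y * d x y) ≤ D := by
  change _ ↔ (R, D) ∈ capacityDistortionRegion p0 d
  constructor
  · exact fun h => closure_minimal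
      (fun v hv => mem_capacityDistortionRegion_of_rdAchievable hp0 hv.1 hv.2)
      (isClosed_capacityDistortionRegion d) h
  · rintro ⟨q, -, hcap, hle⟩
    exact mem_rdRegion_of_mem_twoNodeCapacity hp0 hcap hle

/-- The rate–distortion region is the projection of the coordination capacity region:
`(R,D)` is in the rate–distortion region iff some conditional pmf `p(y|x)` is in the
coordination capacity region with rate `R` and expected distortion at most `D`. -/
theorem rate_distortion_projection {𝒳 𝒴 : Type} [Fintype 𝒳] [Fintype 𝒴]
    (p0 : 𝒳 → ℝ) (hp0 : IsPMF p0) (d : 𝒳 → 𝒴 → ℝ) (hd : ∀ x y, 0 ≤ d x y)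
    (R D : ℝ) :
    (R, D) ∈ rdRegion (𝒴 := 𝒴) p0 d ↔
      ∃ q : 𝒳 → 𝒴 → ℝ, (∀ x, IsPMF (q x)) ∧ (R, q) ∈ twoNodeCapacity p0 ∧
        (∑ x, ∑ y, p0 x * q x y * d x y) ≤ D :=
  rate_distortion_projection_general p0 hp0 d R D
end

section
/- Let X, Y, Z be random variables taking values in a finite set 𝒮 with |𝒮| = k, which are pairwise distinct almost surely (P(X=Y) = P(Y=Z) = P(X=Z) = 0) and conditionally independent given a finite random variable U. Then H(X,Y,Z|U) ≤ max{ log(k1·k2·k3) : k1, k2, k3 nonnegative integers with k1 + k2 + k3 = k }; consequently I(X,Y,Z;U) ≥ H(X,Y,Z) − max{ log(k1·k2·k3) : k1 + k2 + k3 = k }. -/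
open Filter

/-!
Conditionally on `U = u`, the triple `(X, Y, Z)` is a product of three distributions whose
supports are pairwise disjoint, because the triple is a.s. pairwise distinct; their sizes
`k₁, k₂, k₃` therefore satisfy `k₁ + k₂ + k₃ ≤ k`. The entropy of the product is the sum of
the three entropies, each at most the logarithm of its support size, so
`H(X, Y, Z | U = u) ≤ log (k₁ k₂ k₃)`. Averaging over `u` through the chain rule
`H(X, Y, Z, U) = H(U) + ∑ᵤ P(u) H(X, Y, Z | U = u)` gives the first bound, and the second is
the first rewritten with `I(X, Y, Z; U) = H(X, Y, Z) + H(U) - H(X, Y, Z, U)`.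
-/

open Finset Real

section PushForward

variable {S α β : Type} [Fintype S]

theorem pmfMap_nonneg {p : S → ℝ} (hp : ∀ s, 0 ≤ p s) (f : S → α) (a : α) :
    0 ≤ pmfMap p f a := by
  classical
  exact sum_nonneg fun s _ => by split_ifs <;> simp [hp s]

theorem sum_pmfMap [Fintype α] (p : S → ℝ) (f : S → α) : ∑ a, pmfMap p f a = ∑ s, p s := by
  classical
  unfold pmfMap
  rw [sum_comm]
  simp

theorem pmfMap_pmfMap [Fintype α] (p : S → ℝ) (f : S → α) (g : α → β) :
    pmfMap (pmfMap p f) g = pmfMap p (g ∘ f) := by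
  classical
  funext b
  unfold pmfMap
  simp only [ite_sum_zero, Function.comp_apply]
  rw [sum_comm]
  refine sum_congr rfl fun s _ => ?_
  rw [sum_eq_single (f s) (fun a _ ha => by simp [Ne.symm ha]) (by simp)]
  simp

theorem pmfMap_comp_equiv [Fintype α] (p : α → ℝ) (e : S ≃ α) (f : S → β) :
    pmfMap (p ∘ e) f = pmfMap p (f ∘ e.symm) := by
  classical
  funext b
  unfold pmfMap
  rw [← e.sum_comp]
  simp

theorem pmfMap_equiv [Fintype α] (p : S → ℝ) (e : S ≃ α) : pmfMap p e = p ∘ e.symm := by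
  classical
  funext a
  simp [pmfMap, ← e.eq_symm_apply]

theorem pmfMap_snd_apply [Fintype α] [Fintype β] (w : α × β → ℝ) (b : β) :
    pmfMap w Prod.snd b = ∑ a, w (a, b) := by
  classical
  unfold pmfMap
  rw [Fintype.sum_prod_type_right, sum_eq_single b (fun b' _ hb => by simp [hb]) (by simp)]
  simp

theorem isPMF_condPair [Fintype α] [Fintype β] {p : S → ℝ} (hp : ∀ s, 0 ≤ p s)
    (f : S → α) (g : S → β) {b : β} (hb : pmfMap p g b ≠ 0) :
    IsPMF fun a => pmfMap p (fun s => (f s, g s)) (a, b) / pmfMap p g b := by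
  refine ⟨fun a => div_nonneg (pmfMap_nonneg hp _ _) (pmfMap_nonneg hp _ _), ?_⟩
  rw [← sum_div, ← pmfMap_snd_apply, pmfMap_pmfMap]
  exact div_self hb

end PushForward

section Entropy

variable {α β : Type} [Fintype α] [Fintype β]

theorem H2_eq_sum_negMulLog (p : α → ℝ) : H2 p = (∑ a, negMulLog (p a)) / log 2 := by
  rw [H2, sum_div]
  refine sum_congr rfl fun a _ => ?_
  rw [negMulLog, logb]
  ring

theorem sum_negMulLog_eq_negMulLog_sum_add {v : α → ℝ} (hv : ∀ a, 0 ≤ v a) :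
    ∑ a, negMulLog (v a) =
      negMulLog (∑ a, v a) + (∑ a, v a) * ∑ a, negMulLog (v a / ∑ b, v b) := by
  set s := ∑ a, v a
  by_cases hs : s = 0
  · have hv0 : ∀ a, v a = 0 := fun a =>
      (sum_eq_zero_iff_of_nonneg fun a _ => hv a).mp hs a (mem_univ a)
    simp [hv0, hs]
  · calc ∑ a, negMulLog (v a) = ∑ a, negMulLog (s * (v a / s)) := by
          simp only [mul_div_cancel₀ _ hs]
      _ = (∑ a, v a / s) * negMulLog s + s * ∑ a, negMulLog (v a / s) := by
          simp only [negMulLog_mul, sum_add_distrib, sum_mul, mul_sum]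
      _ = _ := by rw [← sum_div, div_self hs, one_mul]

theorem H2_eq_H2_snd_add_sum_mul_H2 {w : α × β → ℝ} (hw : ∀ s, 0 ≤ w s) :
    H2 w = H2 (pmfMap w Prod.snd) +
      ∑ b, pmfMap w Prod.snd b * H2 (fun a => w (a, b) / pmfMap w Prod.snd b) := by
  simp only [H2_eq_sum_negMulLog, pmfMap_snd_apply, Fintype.sum_prod_type_right,
    sum_negMulLog_eq_negMulLog_sum_add fun a => hw (a, _), sum_add_distrib, mul_div_assoc',
    ← sum_div, add_div]

theorem H2_sub_H2_snd_le {w : α × β → ℝ} (hw : IsPMF w) {M : ℝ}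
    (hM : ∀ b, pmfMap w Prod.snd b ≠ 0 → H2 (fun a => w (a, b) / pmfMap w Prod.snd b) ≤ M) :
    H2 w - H2 (pmfMap w Prod.snd) ≤ M := by
  rw [H2_eq_H2_snd_add_sum_mul_H2 hw.1, add_sub_cancel_left]
  calc ∑ b, pmfMap w Prod.snd b * H2 (fun a => w (a, b) / pmfMap w Prod.snd b)
      ≤ ∑ b, pmfMap w Prod.snd b * M := sum_le_sum fun b _ => by
        by_cases hb : pmfMap w Prod.snd b = 0
        · simp [hb]
        · exact mul_le_mul_of_nonneg_left (hM b hb) (pmfMap_nonneg hw.1 _ b)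
    _ = M := by rw [← sum_mul, sum_pmfMap, hw.2, one_mul]

theorem H2_comp_equiv (p : β → ℝ) (e : α ≃ β) : H2 (p ∘ e) = H2 p :=
  e.sum_comp fun b => -(p b * logb 2 (p b))

theorem H2_mul {p : α → ℝ} {q : β → ℝ} (hp : ∑ a, p a = 1) (hq : ∑ b, q b = 1) :
    H2 (fun x : α × β => p x.1 * q x.2) = H2 p + H2 q := by
  simp only [H2_eq_sum_negMulLog, Fintype.sum_prod_type, negMulLog_mul, sum_add_distrib,
    ← mul_sum, ← sum_mul, hp, hq, one_mul, add_div]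

open Classical in
theorem H2_le_logb_card_support {p : α → ℝ} (hp : IsPMF p) :
    H2 p ≤ logb 2 #{a | p a ≠ 0} := by
  set t : Finset α := {a | p a ≠ 0}
  have hpos : ∀ a ∈ t, 0 < p a := fun a ha =>
    (hp.1 a).lt_of_ne (Ne.symm (mem_filter.mp ha).2)
  have hsum : ∑ a ∈ t, p a = 1 := by rw [sum_filter_ne_zero]; exact hp.2
  have jensen := strictConcaveOn_log_Ioi.concaveOn.le_map_sum (t := t) (w := p)
    (p := fun a => (p a)⁻¹) (fun a ha => (hpos a ha).le) hsum
    (fun a ha => Set.mem_Ioi.mpr (inv_pos.mpr (hpos a ha)))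
  have hcard : ∑ a ∈ t, p a • (p a)⁻¹ = #t := by
    simp [sum_congr rfl fun a ha => mul_inv_cancel₀ (hpos a ha).ne']
  rw [hcard] at jensen
  have hH : H2 p = (∑ a ∈ t, p a • log (p a)⁻¹) / log 2 := by
    rw [H2_eq_sum_negMulLog, ← sum_filter_of_ne (p := fun a => p a ≠ 0)
      fun a _ h ha => h (by simp [ha])]
    congr 1
    refine sum_congr rfl fun a _ => ?_
    rw [smul_eq_mul, log_inv, negMulLog]
    ring
  rw [hH, logb]
  exact div_le_div_of_nonneg_right jensen (log_pos one_lt_two).le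

end Entropy

section LogProduct

noncomputable def maxLogProd (k : ℕ) : ℝ :=
  sSup {r : ℝ | ∃ k1 k2 k3 : ℕ, k1 + k2 + k3 = k ∧ r = logb 2 ((k1 * k2 * k3 : ℕ) : ℝ)}

theorem logb_two_natCast_mono {m n : ℕ} (h : m ≤ n) : logb 2 m ≤ logb 2 n := by
  rcases m.eq_zero_or_pos with rfl | hm
  · rw [Nat.cast_zero, logb_zero]
    exact div_nonneg (log_natCast_nonneg n) (log_nonneg one_le_two)
  · exact logb_le_logb_of_le one_lt_two (by exact_mod_cast hm) (by exact_mod_cast h)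

theorem logb_le_maxLogProd {k1 k2 k3 k : ℕ} (h : k1 + k2 + k3 ≤ k) :
    logb 2 ((k1 * k2 * k3 : ℕ) : ℝ) ≤ maxLogProd k := by
  have hbdd : BddAbove {r : ℝ | ∃ k1 k2 k3 : ℕ, k1 + k2 + k3 = k ∧
      r = logb 2 ((k1 * k2 * k3 : ℕ) : ℝ)} := by
    refine ⟨logb 2 ((k * k * k : ℕ) : ℝ), ?_⟩
    rintro _ ⟨l1, l2, l3, hl, rfl⟩
    exact logb_two_natCast_mono (Nat.mul_le_mul (Nat.mul_le_mul (by omega) (by omega)) (by omega))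
  refine (logb_two_natCast_mono ?_).trans (le_csSup hbdd ⟨k - k2 - k3, k2, k3, by omega, rfl⟩)
  exact Nat.mul_le_mul (Nat.mul_le_mul (by omega) le_rfl) le_rfl

end LogProduct

section Support

variable {α : Type} [Fintype α]

open Classical

theorem IsPMF.exists_ne_zero {p : α → ℝ} (hp : IsPMF p) : ∃ a, p a ≠ 0 := by
  obtain ⟨a, -, ha⟩ := exists_ne_zero_of_sum_ne_zero (hp.2 ▸ one_ne_zero : ∑ a, p a ≠ 0)
  exact ⟨a, ha⟩

theorem disjoint_support_of_mul_eq_zero {p q : α → ℝ} (h : ∀ a, p a * q a = 0) :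
    Disjoint ({a | p a ≠ 0} : Finset α) ({a | q a ≠ 0} : Finset α) := by
  simp only [disjoint_left, mem_filter, mem_univ, true_and]
  exact fun a hp hq => mul_ne_zero hp hq (h a)

theorem H2_add_H2_add_H2_le_maxLogProd {qx qy qz : α → ℝ} (hx : IsPMF qx) (hy : IsPMF qy)
    (hz : IsPMF qz) (hzero : ∀ x y z, (x = y ∨ y = z ∨ x = z) → qx x * qy y * qz z = 0) :
    H2 qx + H2 qy + H2 qz ≤ maxLogProd (Fintype.card α) := by
  obtain ⟨x₀, hx₀⟩ := hx.exists_ne_zero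
  obtain ⟨y₀, hy₀⟩ := hy.exists_ne_zero
  obtain ⟨z₀, hz₀⟩ := hz.exists_ne_zero
  set sx : Finset α := {a | qx a ≠ 0}
  set sy : Finset α := {a | qy a ≠ 0}
  set sz : Finset α := {a | qz a ≠ 0}
  have hxy : Disjoint sx sy := disjoint_support_of_mul_eq_zero fun a =>
    (mul_eq_zero.mp (hzero a a z₀ (Or.inl rfl))).resolve_right hz₀
  have hyz : Disjoint sy sz := disjoint_support_of_mul_eq_zero fun a => by
    simpa [mul_assoc, hx₀] using hzero x₀ a a (Or.inr (Or.inl rfl))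
  have hxz : Disjoint sx sz := disjoint_support_of_mul_eq_zero fun a => by
    simpa [mul_right_comm _ (qy y₀), hy₀] using hzero a y₀ a (Or.inr (Or.inr rfl))
  have hcard : #sx + #sy + #sz ≤ Fintype.card α := by
    rw [← card_union_of_disjoint hxy,
      ← card_union_of_disjoint (disjoint_union_left.mpr ⟨hxz, hyz⟩)]
    exact card_le_univ _
  have hpos : ∀ {s : Finset α} {a : α}, a ∈ s → ((#s : ℕ) : ℝ) ≠ 0 := fun ha =>
    Nat.cast_ne_zero.mpr (card_ne_zero_of_mem ha)
  have hsx : x₀ ∈ sx := by simpa [sx] using hx₀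
  have hsy : y₀ ∈ sy := by simpa [sy] using hy₀
  have hsz : z₀ ∈ sz := by simpa [sz] using hz₀
  calc H2 qx + H2 qy + H2 qz ≤ logb 2 #sx + logb 2 #sy + logb 2 #sz :=
        add_le_add_three (H2_le_logb_card_support hx) (H2_le_logb_card_support hy)
          (H2_le_logb_card_support hz)
    _ = logb 2 ((#sx * #sy * #sz : ℕ) : ℝ) := by
        push_cast
        rw [logb_mul (mul_ne_zero (hpos hsx) (hpos hsy)) (hpos hsz),
          logb_mul (hpos hsx) (hpos hsy)]
    _ ≤ maxLogProd (Fintype.card α) := logb_le_maxLogProd hcard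

end Support

theorem H2_cond_le_maxLogProd {𝒮 𝒰 : Type} [Fintype 𝒮] [Fintype 𝒰]
    {w : 𝒮 × 𝒮 × 𝒮 × 𝒰 → ℝ} (hw : ∀ s, 0 ≤ w s)
    (hdistinct : ∀ x y z u, (x = y ∨ y = z ∨ x = z) → w (x, y, z, u) = 0)
    (hcondind : ∀ x y z u,
      w (x, y, z, u) * (pmfMap w (fun s => s.2.2.2) u) ^ 2 =
        pmfMap w (fun s => (s.1, s.2.2.2)) (x, u) *
          pmfMap w (fun s => (s.2.1, s.2.2.2)) (y, u) *
          pmfMap w (fun s => (s.2.2.1, s.2.2.2)) (z, u))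
    {u : 𝒰} (hu : pmfMap w (fun s => s.2.2.2) u ≠ 0) :
    H2 (fun t : 𝒮 × 𝒮 × 𝒮 => w (t.1, t.2.1, t.2.2, u) / pmfMap w (fun s => s.2.2.2) u) ≤
      maxLogProd (Fintype.card 𝒮) := by
  have hx := isPMF_condPair hw (fun s => s.1) (fun s => s.2.2.2) hu
  have hy := isPMF_condPair hw (fun s => s.2.1) (fun s => s.2.2.2) hu
  have hz := isPMF_condPair hw (fun s => s.2.2.1) (fun s => s.2.2.2) hu
  have hcond := fun x y z => hcondind x y z u
  set pU := pmfMap w (fun s => s.2.2.2) u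
  set qx := fun x => pmfMap w (fun s => (s.1, s.2.2.2)) (x, u) / pU
  set qy := fun y => pmfMap w (fun s => (s.2.1, s.2.2.2)) (y, u) / pU
  set qz := fun z => pmfMap w (fun s => (s.2.2.1, s.2.2.2)) (z, u) / pU
  have hfactor : ∀ x y z, w (x, y, z, u) / pU = qx x * qy y * qz z := by
    intro x y z
    simp only [qx, qy, qz]
    rw [div_mul_div_comm, div_mul_div_comm, ← hcond x y z]
    field_simp
  have hyz : ∑ t : 𝒮 × 𝒮, qy t.1 * qz t.2 = 1 := by
    rw [Fintype.sum_prod_type, ← Fintype.sum_mul_sum, hy.2, hz.2, one_mul]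
  calc H2 (fun t : 𝒮 × 𝒮 × 𝒮 => w (t.1, t.2.1, t.2.2, u) / pU)
      = H2 (fun t : 𝒮 × 𝒮 × 𝒮 => qx t.1 * (fun s : 𝒮 × 𝒮 => qy s.1 * qz s.2) t.2) := by
        simp only [hfactor, mul_assoc]
    _ = H2 qx + H2 qy + H2 qz := by rw [H2_mul hx.2 hyz, H2_mul hy.2 hz.2, add_assoc]
    _ ≤ maxLogProd (Fintype.card 𝒮) := H2_add_H2_add_H2_le_maxLogProd hx hy hz fun x y z h => by
        rw [← hfactor, hdistinct x y z u h, zero_div]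

/-- If `X, Y, Z` take values in a set of size `k`, are pairwise distinct a.s., and are
conditionally independent given a finite `U`, then
`H(X,Y,Z|U) ≤ max { log(k1·k2·k3) : k1 + k2 + k3 = k }` and consequently
`I(X,Y,Z;U) ≥ H(X,Y,Z) − max { log(k1·k2·k3) : k1 + k2 + k3 = k }`. -/
theorem task_assignment_entropy_bound {𝒮 𝒰 : Type} [Fintype 𝒮] [Fintype 𝒰]
    (k : ℕ) (hk : Fintype.card 𝒮 = k)
    (w : 𝒮 × 𝒮 × 𝒮 × 𝒰 → ℝ) (hw : IsPMF w)
    (hdistinct : ∀ x y z u, (x = y ∨ y = z ∨ x = z) → w (x, y, z, u) = 0)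
    (hcondind : ∀ x y z u,
      w (x, y, z, u) * (pmfMap w (fun s => s.2.2.2) u) ^ 2 =
        pmfMap w (fun s => (s.1, s.2.2.2)) (x, u) *
          pmfMap w (fun s => (s.2.1, s.2.2.2)) (y, u) *
          pmfMap w (fun s => (s.2.2.1, s.2.2.2)) (z, u)) :
    H2 w - H2 (pmfMap w fun s => s.2.2.2) ≤
      sSup {r : ℝ | ∃ k1 k2 k3 : ℕ, k1 + k2 + k3 = k ∧
        r = Real.logb 2 ((k1 * k2 * k3 : ℕ) : ℝ)} ∧
    H2 (pmfMap w fun s => (s.1, s.2.1, s.2.2.1)) -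
        sSup {r : ℝ | ∃ k1 k2 k3 : ℕ, k1 + k2 + k3 = k ∧
          r = Real.logb 2 ((k1 * k2 * k3 : ℕ) : ℝ)} ≤
      MI w (fun s => (s.1, s.2.1, s.2.2.1)) (fun s => s.2.2.2) := by
  obtain ⟨hw0, hw1⟩ := hw
  subst hk
  change _ ≤ maxLogProd _ ∧ _ - maxLogProd _ ≤ _
  let e : (𝒮 × 𝒮 × 𝒮) × 𝒰 ≃ 𝒮 × 𝒮 × 𝒮 × 𝒰 :=
    (Equiv.prodAssoc 𝒮 (𝒮 × 𝒮) 𝒰).trans ((Equiv.refl 𝒮).prodCongr (Equiv.prodAssoc 𝒮 𝒮 𝒰))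
  set pU := pmfMap w fun s => s.2.2.2
  have hH : H2 (fun t => w (e t)) = H2 w := H2_comp_equiv w e
  have hU : pmfMap (fun t => w (e t)) Prod.snd = pU := pmfMap_comp_equiv w e Prod.snd
  have hcond : H2 w - H2 pU ≤ maxLogProd (Fintype.card 𝒮) := by
    rw [← hH, ← hU]
    refine H2_sub_H2_snd_le ⟨fun _ => hw0 _, (e.sum_comp w).trans hw1⟩ fun u hu => ?_
    rw [hU] at hu ⊢
    exact H2_cond_le_maxLogProd hw0 hdistinct hcondind hu
  have hMI : MI w (fun s => (s.1, s.2.1, s.2.2.1)) (fun s => s.2.2.2) =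
      H2 (pmfMap w fun s => (s.1, s.2.1, s.2.2.1)) + H2 pU - H2 w := by
    have hjoint : pmfMap w (fun s => ((s.1, s.2.1, s.2.2.1), s.2.2.2)) = fun t => w (e t) :=
      pmfMap_equiv w e.symm
    rw [MI, hjoint, hH]
  exact ⟨hcond, by linarith⟩
end
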